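/- Let G = (V,E) be a finite connected k-regular graph (with k ≥ 2) whose adjacency matrix has at most d+1 distinct eigenvalues, and suppose |V| > M(k,d-1) = 1 + k·∑_{j=0}^{d-2}(k-1)^j. Write the distinct eigenvalues as θ_0 > θ_1 > ... > θ_d. Then for each vertex x and each i ∈ {1,...,d}, the number of vertices y such that the (x,y)-entry of the spectral projection E_i equals -K_i/|V| is at least |V| - M(k,d-1), where K_i = ∏_{j∈{1,...,d}, j≠i} (θ_0 - θ_j)/(θ_i - θ_j). -/

import Mathlib

/-!
Let `p = ∏_{j ≠ 0, i} (X - θ_j)`, of degree `d - 1`. Since `(A ^ m) x y` counts walks of length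
`m`, `p(A) x y = 0` whenever `dist x y ≥ d`. On the other hand `p(A) = ∑_m p(θ_m) E_m`, and only
the terms `m = 0, i` survive, so `p(θ_0) E_0 x y + p(θ_i) E_i x y = 0`. Moreover `E_0 = J / |V|`:
`θ_0 = k`, and the `k`-eigenvectors of a connected `k`-regular graph are constant. Hence
`E_i x y = -K_i / |V|` outside the ball of radius `d - 1` around `x`, which has at most
`M(k, d - 1)` vertices.
-/

open Finset Matrix Polynomial

lemma Polynomial.aeval_mul_eq_eval_smul {R A : Type*} [CommSemiring R] [Semiring A] [Algebra R A]
    {a b : A} {r : R} (h : a * b = r • b) (p : R[X]) : aeval a p * b = p.eval r • b := by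
  induction p using Polynomial.induction_on' with
  | add p q hp hq => rw [map_add, add_mul, hp, hq, eval_add, add_smul]
  | monomial n c =>
    have hpow : a ^ n * b = r ^ n • b := by
      induction n with
      | zero => simp
      | succ n ih => rw [pow_succ', mul_assoc, ih, mul_smul_comm, h, smul_smul, pow_succ]
    rw [aeval_monomial, mul_assoc, hpow, ← Algebra.smul_def, smul_smul, eval_monomial]

lemma Polynomial.aeval_eq_sum_eval_smul {R A ι : Type*} [CommSemiring R] [Semiring A]
    [Algebra R A] [Fintype ι] {a : A} {e : ι → A} {θ : ι → R} (he : ∑ m, e m = 1)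
    (hae : ∀ m, a * e m = θ m • e m) (p : R[X]) : aeval a p = ∑ m, p.eval (θ m) • e m := by
  calc aeval a p = ∑ m, aeval a p * e m := by rw [← mul_sum, he, mul_one]
    _ = ∑ m, p.eval (θ m) • e m := sum_congr rfl fun m _ => aeval_mul_eq_eval_smul (hae m) p

namespace Matrix

variable {n : Type*} [Fintype n]

lemma mul_eq_smul_of_isSymm {R : Type*} [CommSemiring R] {M E : Matrix n n R} {c : R}
    (hE : E.IsSymm) (hM : M.IsSymm) (h : M * E = c • E) : E * M = c • E := by
  calc E * M = (M * E)ᵀ := by rw [transpose_mul, hE.eq, hM.eq]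
    _ = c • E := by rw [h, transpose_smul, hE.eq]

lemma mulVec_col_eq_smul {R : Type*} [CommSemiring R] [DecidableEq n] {M E : Matrix n n R} {c : R}
    (h : M * E = c • E) (b : n) : M *ᵥ E.col b = c • E.col b := by
  rw [← mulVec_single_one, mulVec_mulVec, h, smul_mulVec]

variable {K : Type*} [Field K]

lemma exists_eq_of_mulVec_eq_smul [DecidableEq n] {ι : Type*} [Fintype ι] {M : Matrix n n K}
    {e : ι → Matrix n n K} {θ : ι → K} (he : ∑ m, e m = 1) (hem : ∀ m, e m * M = θ m • e m)
    {w : n → K} {μ : K} (hw : w ≠ 0) (h : M *ᵥ w = μ • w) : ∃ m, θ m = μ := by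
  by_contra! hθ
  have hproj : ∀ m, e m *ᵥ w = 0 := fun m => by
    have : (θ m - μ) • (e m *ᵥ w) = 0 := by
      rw [sub_smul, ← smul_mulVec, ← hem, ← mulVec_mulVec, h, mulVec_smul, sub_self]
    exact (smul_eq_zero.mp this).resolve_left (sub_ne_zero.mpr (hθ m))
  exact hw <| by rw [← one_mulVec w, ← he, sum_mulVec, sum_eq_zero fun m _ => hproj m]

lemma IsSymm.apply_eq_inv_card {E : Matrix n n K} [CharZero K] (hE : E.IsSymm) (hidem : E * E = E)
    (hne : E ≠ 0) (hcol : ∀ a a' b, E a b = E a' b) (a b : n) : E a b = (Fintype.card n : K)⁻¹ := by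
  have hconst : ∀ a b a' b', E a b = E a' b' := fun a b a' b' => by
    calc E a b = E a' b := hcol a a' b
      _ = E b a' := hE.apply b a'
      _ = E b' a' := hcol b b' a'
      _ = E a' b' := (hE.apply b' a').symm
  obtain ⟨a₀, b₀, h₀⟩ : ∃ a b, E a b ≠ 0 := by
    by_contra! h
    exact hne (Matrix.ext h)
  have hsq : Fintype.card n * (E a b * E a b) = E a b := by
    conv_rhs => rw [← hidem, mul_apply]
    simp [← hconst a b a _, ← hconst a b _ b]
  have hab : E a b ≠ 0 := hconst a₀ b₀ a b ▸ h₀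
  exact eq_inv_of_mul_eq_one_left (mul_right_cancel₀ hab (by linear_combination hsq))

end Matrix

namespace SimpleGraph

variable {V : Type*} {G : SimpleGraph V}

lemma exists_adj_dist_eq_of_dist_eq_add_one {x z : V} {j : ℕ} (hz : G.dist x z = j + 1) :
    ∃ w, G.Adj w z ∧ G.dist x w = j := by
  obtain ⟨q, hq⟩ := G.exists_walk_of_dist_ne_zero (u := z) (v := x) (by rw [dist_comm]; omega)
  rw [dist_comm, hz] at hq
  cases q with
  | nil => simp at hq
  | @cons _ w _ hzw q =>
    rw [Walk.length_cons, Nat.add_right_cancel_iff] at hq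
    have hle : G.dist x w ≤ j := hq ▸ dist_comm (G := G) ▸ G.dist_le q
    have htri : G.dist x z ≤ G.dist x w + G.dist w z :=
      q.reverse.reachable.dist_triangle_left z
    rw [dist_eq_one_iff_adj.mpr hzw.symm] at htri
    exact ⟨w, hzw.symm, by omega⟩

variable [Fintype V] [DecidableEq V] [DecidableRel G.Adj]

lemma card_neighborFinset_inter_sphere_le {k : ℕ} (hreg : G.IsRegularOfDegree k) {x z : V} {j : ℕ}
    (hz : G.dist x z = j + 1) :
    #(G.neighborFinset z ∩ ({y | G.dist x y = j + 2} : Finset V)) ≤ k - 1 := by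
  obtain ⟨w, hwz, hw⟩ := exists_adj_dist_eq_of_dist_eq_add_one hz
  calc #(G.neighborFinset z ∩ ({y | G.dist x y = j + 2} : Finset V))
      ≤ #((G.neighborFinset z).erase w) := card_le_card fun y hy => by
        simp only [mem_inter, mem_filter, mem_univ, true_and] at hy
        exact mem_erase.mpr ⟨by rintro rfl; omega, hy.1⟩
    _ = k - 1 := by
        rw [card_erase_of_mem ((G.mem_neighborFinset z w).mpr hwz.symm),
          card_neighborFinset_eq_degree, hreg z]

lemma card_sphere_le {k : ℕ} (hreg : G.IsRegularOfDegree k) (x : V) (j : ℕ) :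
    #{y | G.dist x y = j + 1} ≤ k * (k - 1) ^ j := by
  induction j with
  | zero =>
    calc #{y | G.dist x y = 0 + 1} ≤ #(G.neighborFinset x) :=
          card_le_card fun y hy => by simpa using hy
      _ = k * (k - 1) ^ 0 := by rw [card_neighborFinset_eq_degree, hreg x, pow_zero, mul_one]
  | succ j ih =>
    have hcover : ({y | G.dist x y = j + 2} : Finset V) ⊆
        ({y | G.dist x y = j + 1} : Finset V).biUnion
          fun z => G.neighborFinset z ∩ ({y | G.dist x y = j + 2} : Finset V) := fun y hy => by
      simp only [mem_filter, mem_univ, true_and] at hy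
      obtain ⟨w, hwy, hw⟩ := exists_adj_dist_eq_of_dist_eq_add_one hy
      simpa [mem_biUnion, hy] using ⟨w, hw, hwy⟩
    calc #{y | G.dist x y = j + 1 + 1}
        ≤ #{y | G.dist x y = j + 1} * (k - 1) := (card_le_card hcover).trans <|
          card_biUnion_le_card_mul _ _ _ fun z hz =>
            card_neighborFinset_inter_sphere_le hreg (by simpa using hz)
      _ ≤ k * (k - 1) ^ j * (k - 1) := Nat.mul_le_mul_right _ ih
      _ = k * (k - 1) ^ (j + 1) := by ring

lemma card_ball_le (hconn : G.Connected) {k : ℕ} (hreg : G.IsRegularOfDegree k) (x : V) (r : ℕ) :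
    #{y | G.dist x y ≤ r} ≤ 1 + k * ∑ j ∈ range r, (k - 1) ^ j := by
  induction r with
  | zero =>
    calc #{y | G.dist x y ≤ 0} ≤ #{x} := card_le_card fun y hy => by
          simpa [hconn.dist_eq_zero_iff, eq_comm] using hy
      _ = 1 + k * ∑ j ∈ range 0, (k - 1) ^ j := by simp
  | succ r ih =>
    calc #{y | G.dist x y ≤ r + 1}
        ≤ #(({y | G.dist x y ≤ r} : Finset V) ∪ ({y | G.dist x y = r + 1} : Finset V)) :=
          card_le_card fun y hy => by
            simp only [mem_filter, mem_union, mem_univ, true_and] at hy ⊢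
            omega
      _ ≤ 1 + k * ∑ j ∈ range r, (k - 1) ^ j + k * (k - 1) ^ r :=
          (card_union_le _ _).trans (add_le_add ih (card_sphere_le hreg x r))
      _ = 1 + k * ∑ j ∈ range (r + 1), (k - 1) ^ j := by rw [sum_range_succ]; ring

lemma card_sub_le_ncard_of_lt_dist (hconn : G.Connected) {k : ℕ} (hreg : G.IsRegularOfDegree k)
    (x : V) (r : ℕ) {P : V → Prop} (hP : ∀ y, r < G.dist x y → P y) :
    Fintype.card V - (1 + k * ∑ j ∈ range r, (k - 1) ^ j) ≤ {y | P y}.ncard := by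
  have hsplit := card_filter_add_card_filter_not (s := univ) (fun y => G.dist x y ≤ r)
  have hball := card_ball_le hconn hreg x r
  calc Fintype.card V - (1 + k * ∑ j ∈ range r, (k - 1) ^ j)
      ≤ #{y | ¬G.dist x y ≤ r} := by rw [card_univ] at hsplit; omega
    _ ≤ {y | P y}.ncard := by
      rw [← Set.ncard_coe_finset]
      exact Set.ncard_le_ncard (fun y hy => hP y (by simpa using hy))

lemma adjMatrix_pow_apply_eq_zero_of_lt_dist {R : Type*} [Semiring R] {n : ℕ} {x y : V}
    (h : n < G.dist x y) : (G.adjMatrix R ^ n) x y = 0 := by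
  rw [adjMatrix_pow_apply_eq_card_walk,
    Fintype.card_eq_zero_iff.mpr ⟨fun ⟨q, hq⟩ => (G.dist_le q).not_gt (hq ▸ h)⟩, Nat.cast_zero]

lemma aeval_adjMatrix_apply_eq_zero_of_natDegree_lt_dist {R : Type*} [CommSemiring R] {p : R[X]}
    {x y : V} (hp : p.natDegree < G.dist x y) : aeval (G.adjMatrix R) p x y = 0 := by
  rw [aeval_eq_sum_range, Matrix.sum_apply]
  refine sum_eq_zero fun m hm => ?_
  rw [Matrix.smul_apply, adjMatrix_pow_apply_eq_zero_of_lt_dist (by rw [mem_range] at hm; omega),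
    smul_zero]

lemma lapMatrix_mulVec_eq_smul {k : ℕ} (hreg : G.IsRegularOfDegree k) {v : V → ℝ} {θ : ℝ}
    (h : G.adjMatrix ℝ *ᵥ v = θ • v) : G.lapMatrix ℝ *ᵥ v = (k - θ) • v := by
  funext a
  rw [lapMatrix_mulVec_apply, hreg a, ← adjMatrix_mulVec_apply, h]
  simp only [Pi.smul_apply, smul_eq_mul]
  ring

lemma le_of_adjMatrix_mulVec_eq_smul {k : ℕ} (hreg : G.IsRegularOfDegree k) {v : V → ℝ} {θ : ℝ}
    (hv : v ≠ 0) (h : G.adjMatrix ℝ *ᵥ v = θ • v) : θ ≤ k := by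
  have hpsd := (posSemidef_lapMatrix ℝ G).dotProduct_mulVec_nonneg v
  rw [lapMatrix_mulVec_eq_smul hreg h, dotProduct_smul, smul_eq_mul] at hpsd
  have hpos : 0 < star v ⬝ᵥ v := dotProduct_star_self_pos_iff.mpr hv
  linarith [nonneg_of_mul_nonneg_left hpsd hpos]

lemma Connected.apply_eq_of_adjMatrix_mulVec_eq_degree_smul (hconn : G.Connected) {k : ℕ}
    (hreg : G.IsRegularOfDegree k) {v : V → ℝ} (h : G.adjMatrix ℝ *ᵥ v = (k : ℝ) • v) (a b : V) :
    v a = v b :=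
  (lapMatrix_mulVec_eq_zero_iff_forall_reachable G).mp
    (by rw [lapMatrix_mulVec_eq_smul hreg h, sub_self, zero_smul]) a b (hconn a b)

lemma spectralIdempotent_apply_of_le_dist {d : ℕ} {θ : Fin (d + 1) → ℝ} (hθ : Function.Injective θ)
    {E : Fin (d + 1) → Matrix V V ℝ} (hsum : ∑ i, E i = 1)
    (hAE : ∀ i, G.adjMatrix ℝ * E i = θ i • E i) {x y : V}
    (hE0 : E 0 x y = (Fintype.card V : ℝ)⁻¹) (hd : d ≤ G.dist x y) {i : Fin (d + 1)} (hi : i ≠ 0) :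
    E i x y = -(∏ j ∈ univ.filter (fun j : Fin (d + 1) => j ≠ 0 ∧ j ≠ i),
      (θ 0 - θ j) / (θ i - θ j)) / (Fintype.card V : ℝ) := by
  set S := univ.filter (fun j : Fin (d + 1) => j ≠ 0 ∧ j ≠ i)
  set p := ∏ j ∈ S, (X - C (θ j))
  have hdeg : p.natDegree < G.dist x y := by
    have hS : S ⊂ univ.erase 0 := (ssubset_iff_of_subset fun j hj => by simp_all [S]).mpr
      ⟨i, mem_erase.mpr ⟨hi, mem_univ i⟩, by simp [S]⟩
    calc p.natDegree = #S := natDegree_finsetProd_X_sub_C_eq_card S θ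
      _ < #(univ.erase (0 : Fin (d + 1))) := card_lt_card hS
      _ = d := by simp
      _ ≤ G.dist x y := hd
  have hvanish : ∀ m ∉ ({0, i} : Finset (Fin (d + 1))), p.eval (θ m) = 0 := fun m hm => by
    rw [eval_prod]
    exact prod_eq_zero (by simpa [S, not_or] using hm) (by simp)
  have hpi : p.eval (θ i) ≠ 0 := by
    rw [eval_prod]
    exact prod_ne_zero_iff.mpr fun j hj =>
      by simpa [sub_eq_zero] using hθ.ne (by simp [S] at hj; exact Ne.symm hj.2)
  have hrel : p.eval (θ 0) * E 0 x y + p.eval (θ i) * E i x y = 0 := by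
    have h := aeval_adjMatrix_apply_eq_zero_of_natDegree_lt_dist hdeg
    rw [aeval_eq_sum_eval_smul hsum hAE, Matrix.sum_apply,
      ← sum_subset (subset_univ {0, i}) fun m _ hm => by simp [hvanish m hm],
      sum_pair (Ne.symm hi)] at h
    simpa using h
  have heval : ∀ t, p.eval t = ∏ j ∈ S, (t - θ j) := fun t => by simp [p, eval_prod]
  rw [prod_div_distrib, ← heval, ← heval]
  rw [hE0] at hrel
  field_simp
  linear_combination hrel

end SimpleGraph

open SimpleGraph

theorem stmt_4_general {V : Type*} [Fintype V] [DecidableEq V]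
    (G : SimpleGraph V) [DecidableRel G.Adj] (k d : ℕ)
    (hconn : G.Connected) (hreg : G.IsRegularOfDegree k)
    (θ : Fin (d + 1) → ℝ) (hθ : StrictAnti θ)
    (E : Fin (d + 1) → Matrix V V ℝ)
    (hsymm : ∀ i, (E i).IsSymm)
    (hidem : ∀ i, E i * E i = E i)
    (hsum : ∑ i, E i = 1)
    (hAE : ∀ i, G.adjMatrix ℝ * E i = θ i • E i)
    (hne : ∀ i, E i ≠ 0) :
    ∀ x : V, ∀ i : Fin (d + 1), i ≠ 0 →
      Fintype.card V - (1 + k * ∑ j ∈ Finset.range (d - 1), (k - 1) ^ j) ≤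
        {y : V | E i x y =
          -(∏ j ∈ Finset.univ.filter (fun j : Fin (d + 1) => j ≠ 0 ∧ j ≠ i),
              (θ 0 - θ j) / (θ i - θ j)) / (Fintype.card V : ℝ)}.ncard := by
  intro x i hi
  have hEA : ∀ m, E m * G.adjMatrix ℝ = θ m • E m := fun m =>
    mul_eq_smul_of_isSymm (hsymm m) G.isSymm_adjMatrix (hAE m)
  have hθ0 : θ 0 = k := by
    obtain ⟨m, hm⟩ := exists_eq_of_mulVec_eq_smul hsum hEA (w := fun _ => 1) (μ := k)
      (fun h => one_ne_zero (congrFun h x))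
      (funext fun v => by simp [hreg v])
    obtain ⟨b, hb⟩ : ∃ b, (E 0).col b ≠ 0 := by
      by_contra! h
      exact hne 0 (Matrix.ext fun a b => congrFun (h b) a)
    exact le_antisymm (le_of_adjMatrix_mulVec_eq_smul hreg hb (mulVec_col_eq_smul (hAE 0) b))
      (hm ▸ hθ.antitone (Fin.zero_le m))
  have hE0 : ∀ a b, E 0 a b = (Fintype.card V : ℝ)⁻¹ :=
    (hsymm 0).apply_eq_inv_card (hidem 0) (hne 0) fun a a' b =>
      hconn.apply_eq_of_adjMatrix_mulVec_eq_degree_smul hreg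
        (hθ0 ▸ mulVec_col_eq_smul (hAE 0) b) a a'
  exact card_sub_le_ncard_of_lt_dist hconn hreg x (d - 1) fun y hy =>
    spectralIdempotent_apply_of_le_dist hθ.injective hsum hAE (hE0 x y) (by omega) hi

/-- Let `G` be a finite connected `k`-regular graph (`k ≥ 2`) with at most
`d+1` distinct adjacency eigenvalues and `|V| > M(k, d-1) = 1 + k * ∑_{j=0}^{d-2} (k-1)^j`.
Writing the distinct eigenvalues as `θ 0 > θ 1 > ⋯ > θ d`, with spectral projections
`E 0, …, E d`, for each vertex `x` and each `i ∈ {1, …, d}`, the number of vertices `y`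
such that the `(x,y)`-entry of `E i` equals `-K i / |V|` is at least `|V| - M(k, d-1)`,
where `K i = ∏_{j ∈ {1,…,d}, j ≠ i} (θ 0 - θ j) / (θ i - θ j)`. -/
theorem stmt_4 {V : Type*} [Fintype V] [DecidableEq V]
    (G : SimpleGraph V) [DecidableRel G.Adj] (k d : ℕ) (hk : 2 ≤ k)
    (hconn : G.Connected) (hreg : G.IsRegularOfDegree k)
    (hspec : (spectrum ℝ (G.adjMatrix ℝ)).ncard ≤ d + 1)
    (hcard : Fintype.card V > 1 + k * ∑ j ∈ Finset.range (d - 1), (k - 1) ^ j)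
    (θ : Fin (d + 1) → ℝ) (hθ : StrictAnti θ)
    (E : Fin (d + 1) → Matrix V V ℝ)
    (hsymm : ∀ i, (E i).IsSymm)
    (hidem : ∀ i, E i * E i = E i)
    (horth : ∀ i j, i ≠ j → E i * E j = 0)
    (hsum : ∑ i, E i = 1)
    (hAE : ∀ i, G.adjMatrix ℝ * E i = θ i • E i)
    (hne : ∀ i, E i ≠ 0) :
    ∀ x : V, ∀ i : Fin (d + 1), i ≠ 0 →
      Fintype.card V - (1 + k * ∑ j ∈ Finset.range (d - 1), (k - 1) ^ j) ≤
        {y : V | E i x y =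
          -(∏ j ∈ Finset.univ.filter (fun j : Fin (d + 1) => j ≠ 0 ∧ j ≠ i),
              (θ 0 - θ j) / (θ i - θ j)) / (Fintype.card V : ℝ)}.ncard :=
  stmt_4_general G k d hconn hreg θ hθ E hsymm hidem hsum hAE hne
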